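/- arXiv:1312.4510 — 2 statements merged into one kernel-verified Lean document; each statement's English description precedes it below -/
import Mathlib

section
/- For 0 ≤ k ≤ m and 2m ≤ n: (n-m)!²/(n!·(n-2m+k)!) < (n-m)^{-k}. -/
lemma factorial_add_le_pow (a : ℕ) : ∀ b : ℕ, (a + b).factorial ≤ a.factorial * (a + b) ^ b := by
  intro b
  induction b with
  | zero => simp
  | succ b ih =>
    have h1 : (a + (b + 1)).factorial = (a + b + 1) * (a + b).factorial := by
      rw [show a + (b + 1) = (a + b) + 1 by ring, Nat.factorial_succ]
    rw [h1]
    calc (a + b + 1) * (a + b).factorial ≤ (a + b + 1) * (a.factorial * (a + b) ^ b) :=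
          Nat.mul_le_mul_left _ ih
      _ ≤ (a + b + 1) * (a.factorial * (a + b + 1) ^ b) := by
          exact Nat.mul_le_mul_left _ (Nat.mul_le_mul_left _
            (Nat.pow_le_pow_left (Nat.le_succ _) _))
      _ = a.factorial * (a + (b + 1)) ^ (b + 1) := by ring_nf
  
/-- for `1 ≤ k ≤ m` and `2m ≤ n` (with `m < n`),
`(n-m)!²/(n!·(n-2m+k)!) < (n-m)^{-k}`. -/
theorem factorial_ratio_lt (n m k : ℕ) (hk : 1 ≤ k) (hkm : k ≤ m) (h2m : 2 * m ≤ n)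
    (hmn : m < n) :
    ((n - m).factorial : ℝ) ^ 2 / ((n.factorial : ℝ) * ((n - 2 * m + k).factorial : ℝ)) <
      ((n - m : ℕ) : ℝ) ^ (-(k : ℤ)) := by
  set d := n - m with hd
  set a := n - 2 * m + k with ha
  have hda : d = a + (m - k) := by omega
  have hm1 : 1 ≤ m := hk.trans hkm
  have key : d.factorial ^ 2 * d ^ k < n.factorial * a.factorial := by
    have h1 : d.factorial ≤ a.factorial * d ^ (m - k) := by
      rw [hda]; exact factorial_add_le_pow a (m - k)
    have h2 : d.factorial * (d + 1) ^ m ≤ n.factorial := by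
      have := @Nat.factorial_mul_pow_le_factorial d m
      rwa [show d + m = n by omega] at this
    have h3 : d ^ m < (d + 1) ^ m :=
      Nat.pow_lt_pow_left (Nat.lt_succ_self d) (by omega)
    calc d.factorial ^ 2 * d ^ k
        ≤ d.factorial * (a.factorial * d ^ (m - k)) * d ^ k := by
          rw [pow_two]
          exact Nat.mul_le_mul_right _ (Nat.mul_le_mul_left _ h1)
      _ = d.factorial * (d ^ (m - k) * d ^ k) * a.factorial := by ring
      _ = d.factorial * d ^ m * a.factorial := by
          rw [← pow_add, show m - k + k = m by omega]
      _ < d.factorial * (d + 1) ^ m * a.factorial := by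
          exact Nat.mul_lt_mul_of_lt_of_le
            (Nat.mul_lt_mul_of_le_of_lt (le_refl _) h3 d.factorial_pos)
            (le_refl _) a.factorial_pos
      _ ≤ n.factorial * a.factorial := Nat.mul_le_mul_right _ h2
  have hdpos : 0 < d := by omega
  have hB : (0:ℝ) < (n.factorial : ℝ) * (a.factorial : ℝ) := by positivity
  have hpow : (0:ℝ) < ((d:ℕ):ℝ) ^ k := by positivity
  rw [zpow_neg, zpow_natCast, ← one_div, div_lt_div_iff₀ hB hpow, one_mul]
  calc ((d.factorial : ℝ)) ^ 2 * (d:ℝ) ^ k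
      = ((d.factorial ^ 2 * d ^ k : ℕ) : ℝ) := by push_cast; ring
    _ < ((n.factorial * a.factorial : ℕ) : ℝ) := by exact_mod_cast key
    _ = (n.factorial : ℝ) * (a.factorial : ℝ) := by push_cast; ring
end

section
/- Let (Y, v) be a Whitehead descriptor over A (|A| = r ≥ 2) and let f_a (a ∈ A) be partial injections on [n], with f_v interpreted as f_{v̄}^{-1} when v ∈ Ā. Then |negative(f⃗, Y, v)| ≤ ∑_{a ∈ A, a ≠ v, a ≠ v̄} |extr(f_v) ∩ extr(f_a)| and |positive(f⃗, Y, v)| ≥ sequence(f_v) − ∑_{a ∈ A, a ≠ v, a ≠ v̄} |extr(f_v) ∩ extr(f_a)|. -/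
open Classical in
/-- The inverse of a partial injection `g : Fin n → Option (Fin n)`. -/
noncomputable def pinv {n : ℕ} (g : Fin n → Option (Fin n)) :
    Fin n → Option (Fin n) :=
  fun i => if h : ∃ j, g j = some i then some h.choose else none

/-- The extremities of a partial injection: vertices where it is undefined or which
have no preimage. -/
def extr {n : ℕ} (g : Fin n → Option (Fin n)) : Set (Fin n) :=
  {i | g i = none ∨ ∀ j, g j ≠ some i}

/-- The number of sequences of the functional graph of a partial injection: each
maximal sequence ends at exactly one vertex where the map is undefined. -/
noncomputable def seqCount {n : ℕ} (g : Fin n → Option (Fin n)) : ℕ :=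
  Set.ncard {i | g i = none}

/-- The partial injection associated with a letter of the symmetrized alphabet
`A ⊕ A` (`Sum.inl a` is the letter `a`, `Sum.inr a` its inverse `ā`): `f a` for
`a ∈ A`, and its inverse for `ā ∈ Ā`. -/
noncomputable def letterMap {A : Type*} {n : ℕ} (f : A → (Fin n → Option (Fin n))) :
    A ⊕ A → (Fin n → Option (Fin n))
  | Sum.inl a => f a
  | Sum.inr a => pinv (f a)

/-- Vertex `p` has an incoming edge labeled by the letter `ℓ ∈ Ã = A ⊕ A`. -/
def hasIn {A : Type*} {n : ℕ} (f : A → (Fin n → Option (Fin n)))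
    (ℓ : A ⊕ A) (p : Fin n) : Prop :=
  ∃ i, letterMap f ℓ i = some p


lemma pinv_some_imp {n : ℕ} {g : Fin n → Option (Fin n)} {i p : Fin n}
    (h : pinv g i = some p) : g p = some i := by
  unfold pinv at h
  split_ifs at h with hex
  obtain rfl : hex.choose = p := by injection h
  exact hex.choose_spec

lemma pinv_eq_some_iff {n : ℕ} {g : Fin n → Option (Fin n)}
    (hg : ∀ i j x, g i = some x → g j = some x → i = j)
    {i p : Fin n} : pinv g i = some p ↔ g p = some i := by
  constructor
  · exact pinv_some_imp
  · intro hp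
    have hex : ∃ j, g j = some i := ⟨p, hp⟩
    unfold pinv
    rw [dif_pos hex]
    exact congrArg some (hg _ _ _ hex.choose_spec hp)

lemma pinv_eq_none_iff {n : ℕ} {g : Fin n → Option (Fin n)} {p : Fin n} :
    pinv g p = none ↔ ∀ j, g j ≠ some p := by
  unfold pinv
  split_ifs with hex
  · constructor
    · intro h; simp at h
    · intro h; exact absurd hex.choose_spec (h _)
  · simpa using not_exists.mp hex

lemma card_none_eq_card_nopre {n : ℕ} (g : Fin n → Option (Fin n))
    (hg : ∀ i j x, g i = some x → g j = some x → i = j) :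
    (Finset.univ.filter (fun p => g p = none)).card
      = (Finset.univ.filter (fun p : Fin n => ∀ i, g i ≠ some p)).card := by
  classical
  have hD : (Finset.univ.filter (fun p : Fin n => ¬ g p = none)).card
      = (Finset.univ.filter (fun p : Fin n => ¬ ∀ i, g i ≠ some p)).card := by
    apply Finset.card_bij (fun p hp => Option.get (g p)
      (Option.ne_none_iff_isSome.mp (by simpa using (Finset.mem_filter.mp hp).2)))
    · intro p hp
      simp only [Finset.mem_filter, Finset.mem_univ, true_and, not_forall, not_not]
      exact ⟨p, by simp [Option.some_get]⟩
    · intro p hp q hq h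
      have hp' : (g p).isSome := Option.ne_none_iff_isSome.mp
        (by simpa using (Finset.mem_filter.mp hp).2)
      have hq' : (g q).isSome := Option.ne_none_iff_isSome.mp
        (by simpa using (Finset.mem_filter.mp hq).2)
      have e1 : g p = some ((g q).get hq') := by rw [← h]; exact (Option.some_get hp').symm
      exact hg p q _ e1 (Option.some_get hq').symm
    · intro b hb
      simp only [Finset.mem_filter, Finset.mem_univ, true_and, not_forall, not_not] at hb
      obtain ⟨i, hi⟩ := hb
      refine ⟨i, Finset.mem_filter.mpr ⟨Finset.mem_univ _, by simp [hi]⟩, ?_⟩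
      simp [hi]
  have h1 := Finset.card_filter_add_card_filter_not
    (s := Finset.univ) (p := fun p : Fin n => g p = none)
  have h2 := Finset.card_filter_add_card_filter_not
    (s := Finset.univ) (p := fun p : Fin n => ∀ i, g i ≠ some p)
  omega

lemma sum_elim_eq_imp {A : Type*} (ℓ v : A ⊕ A)
    (h : Sum.elim id id ℓ = Sum.elim id id v) : ℓ = v ∨ ℓ = Sum.swap v := by
  rcases ℓ with x | x <;> rcases v with a | a <;> simp_all [Sum.swap]

/-- for a Whitehead descriptor `(Y, v)` (with `v ∈ Y`, `v̄ ∉ Y`,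
`2 ≤ |Y| ≤ 2r−2`) and an `A`-tuple `f` of partial injections on `[n]`
(with `f_v = f_{v̄}⁻¹` when `v ∈ Ā`),
`|negative(f⃗,Y,v)| ≤ ∑_{a ≠ v, v̄} |extr(f_v) ∩ extr(f_a)|` and
`|positive(f⃗,Y,v)| ≥ sequence(f_v) − ∑_{a ≠ v, v̄} |extr(f_v) ∩ extr(f_a)|`.
Here `negative(f⃗,Y,v)` is the set of vertices with an incoming `v`-edge and all
incoming edges labeled in `Y`, and `positive(f⃗,Y,v)` is the set of vertices with
an incoming `Y`-labeled edge, an incoming edge labeled outside `Y`, and no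
incoming `v`-edge. -/
theorem whitehead_negative_positive_bounds {A : Type*} [Fintype A] [DecidableEq A]
    (r n : ℕ) (hr : 2 ≤ r) (hcardA : Fintype.card A = r)
    (f : A → (Fin n → Option (Fin n)))
    (hinj : ∀ a, ∀ i j x, f a i = some x → f a j = some x → i = j)
    (Y : Finset (A ⊕ A)) (v : A ⊕ A)
    (hvY : v ∈ Y) (hvbar : Sum.swap v ∉ Y) (hY2 : 2 ≤ Y.card)
    (hYle : Y.card ≤ 2 * r - 2) :
    ({p : Fin n | hasIn f v p ∧ ∀ ℓ : A ⊕ A, hasIn f ℓ p → ℓ ∈ Y}.ncard ≤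
      ∑ a ∈ Finset.univ.erase (Sum.elim id id v),
        (extr (letterMap f v) ∩ extr (f a)).ncard) ∧
    ((seqCount (letterMap f v) : ℤ) -
        ∑ a ∈ Finset.univ.erase (Sum.elim id id v),
          ((extr (letterMap f v) ∩ extr (f a)).ncard : ℤ) ≤
      ({p : Fin n | (∃ ℓ ∈ Y, hasIn f ℓ p) ∧ (∃ ℓ ∉ Y, hasIn f ℓ p) ∧
          ¬ hasIn f v p}.ncard : ℤ)) := by
  classical
  -- injectivity of the map associated with v
  have hg : ∀ i j x, letterMap f v i = some x → letterMap f v j = some x → i = j := by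
    rcases v with a | a
    · exact hinj a
    · intro i j x hi hj
      have h1 := pinv_some_imp hi
      have h2 := pinv_some_imp hj
      rw [h1] at h2
      injection h2
  -- incoming swap-v edge iff the map is defined
  have hswap : ∀ p, hasIn f (Sum.swap v) p ↔ letterMap f v p ≠ none := by
    rcases v with a | a <;> intro p
    · show hasIn f (Sum.inr a) p ↔ f a p ≠ none
      constructor
      · rintro ⟨i, hi⟩
        have h1 : f a p = some i := pinv_some_imp hi
        simp [h1]
      · intro h
        obtain ⟨x, hx⟩ := Option.ne_none_iff_exists'.mp h
        exact ⟨x, (pinv_eq_some_iff (hinj a)).mpr hx⟩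
    · show hasIn f (Sum.inl a) p ↔ pinv (f a) p ≠ none
      rw [Ne, pinv_eq_none_iff]
      push_neg
      exact Iff.rfl
  -- a vertex not in extr (f a) has incoming a- and ā-edges
  have hextr_not : ∀ (a : A) (p : Fin n), p ∉ extr (f a) →
      hasIn f (Sum.inl a) p ∧ hasIn f (Sum.inr a) p := by
    intro a p hp
    simp only [extr, Set.mem_setOf_eq, not_or, not_forall, not_not] at hp
    obtain ⟨h1, j, hj⟩ := hp
    refine ⟨⟨j, hj⟩, ?_⟩
    obtain ⟨x, hx⟩ := Option.ne_none_iff_exists'.mp h1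
    exact ⟨x, (pinv_eq_some_iff (hinj a)).mpr hx⟩
  have hIncoming : ∀ p : Fin n,
      (∀ a ∈ Finset.univ.erase (Sum.elim id id v), p ∉ extr (f a)) →
      ∀ ℓ : A ⊕ A, Sum.elim id id ℓ ≠ Sum.elim id id v → hasIn f ℓ p := by
    intro p hp ℓ hℓ
    rcases ℓ with b | b
    · exact (hextr_not b p (hp b (Finset.mem_erase.mpr
        ⟨by simpa using hℓ, Finset.mem_univ b⟩))).1
    · exact (hextr_not b p (hp b (Finset.mem_erase.mpr
        ⟨by simpa using hℓ, Finset.mem_univ b⟩))).2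
  -- the set L of letters not over the base of v
  set L : Finset (A ⊕ A) :=
    Finset.univ.filter (fun ℓ => Sum.elim id id ℓ ≠ Sum.elim id id v) with hL
  have hvL : v ∉ L := by simp [hL]
  have hcardL : L.card + 2 = 2 * r := by
    have hcompl : Finset.univ.filter
        (fun ℓ : A ⊕ A => ¬ Sum.elim id id ℓ ≠ Sum.elim id id v) = {v, Sum.swap v} := by
      ext ℓ
      simp only [Finset.mem_filter, Finset.mem_univ, true_and, not_not,
        Finset.mem_insert, Finset.mem_singleton]
      constructor
      · exact sum_elim_eq_imp ℓ v
      · rintro (rfl | rfl)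
        · rfl
        · rcases v with a | a <;> rfl
    have hvs : v ≠ Sum.swap v := by rcases v with a | a <;> simp [Sum.swap]
    have h2 : ({v, Sum.swap v} : Finset (A ⊕ A)).card = 2 := by
      rw [Finset.card_insert_of_notMem (by simpa using hvs), Finset.card_singleton]
    have h3 := Finset.card_filter_add_card_filter_not
      (s := Finset.univ) (p := fun ℓ : A ⊕ A => Sum.elim id id ℓ ≠ Sum.elim id id v)
    rw [hcompl, h2] at h3
    have h4 : (Finset.univ : Finset (A ⊕ A)).card = 2 * r := by
      simp [Fintype.card_sum, hcardA]; ring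
    rw [← hL] at h3
    omega
  have hinsert : ¬ (insert v L ⊆ Y) := by
    intro hsub
    have h1 : (insert v L).card ≤ Y.card := Finset.card_le_card hsub
    rw [Finset.card_insert_of_notMem hvL] at h1
    omega
  -- the bad set U
  set U : Finset (Fin n) := (Finset.univ.erase (Sum.elim id id v)).biUnion
    (fun a => (Set.toFinite (extr (letterMap f v) ∩ extr (f a))).toFinset) with hU
  have hUcard : U.card ≤ ∑ a ∈ Finset.univ.erase (Sum.elim id id v),
      (extr (letterMap f v) ∩ extr (f a)).ncard := by
    refine Finset.card_biUnion_le.trans (Finset.sum_le_sum ?_)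
    intro a _
    exact (Set.ncard_eq_toFinset_card _ _).symm.le
  -- common step: find a bad letter set membership
  have hexU : ∀ p : Fin n, p ∈ extr (letterMap f v) →
      (∃ a ∈ Finset.univ.erase (Sum.elim id id v), p ∈ extr (f a)) → p ∈ U := by
    intro p hp ⟨a, ha, hpa⟩
    exact Finset.mem_biUnion.mpr ⟨a, ha, (Set.Finite.mem_toFinset _).mpr ⟨hp, hpa⟩⟩
  constructor
  · -- negative bound
    rw [Set.ncard_eq_toFinset_card _ (Set.toFinite _)]
    refine (Finset.card_le_card ?_).trans hUcard
    intro p hp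
    rw [Set.Finite.mem_toFinset] at hp
    obtain ⟨hvin, hall⟩ := hp
    have hpnone : letterMap f v p = none := by
      by_contra h
      exact hvbar (hall _ ((hswap p).mpr h))
    refine hexU p (Or.inl hpnone) ?_
    by_contra h
    push_neg at h
    apply hinsert
    intro ℓ hℓ
    rcases Finset.mem_insert.mp hℓ with rfl | hℓ'
    · exact hvY
    · exact hall ℓ (hIncoming p h ℓ (by simpa [hL] using hℓ'))
  · -- positive bound
    set S : Finset (Fin n) := Finset.univ.filter (fun p => ¬ hasIn f v p) with hS
    set P : Finset (Fin n) := (Set.toFinite {p : Fin n | (∃ ℓ ∈ Y, hasIn f ℓ p) ∧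
        (∃ ℓ ∉ Y, hasIn f ℓ p) ∧ ¬ hasIn f v p}).toFinset with hP
    have hPS : P ⊆ S := by
      intro p hp
      rw [hP, Set.Finite.mem_toFinset] at hp
      exact Finset.mem_filter.mpr ⟨Finset.mem_univ _, hp.2.2⟩
    have hSdiff : S \ P ⊆ U := by
      intro p hp
      rw [Finset.mem_sdiff] at hp
      obtain ⟨hpS, hpP⟩ := hp
      have hnv : ¬ hasIn f v p := (Finset.mem_filter.mp hpS).2
      have hpx : p ∈ extr (letterMap f v) :=
        Or.inr (fun j hj => hnv ⟨j, hj⟩)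
      refine hexU p hpx ?_
      by_contra h
      push_neg at h
      have hin : ∀ ℓ : A ⊕ A, Sum.elim id id ℓ ≠ Sum.elim id id v → hasIn f ℓ p :=
        hIncoming p h
      apply hpP
      rw [hP, Set.Finite.mem_toFinset]
      refine ⟨?_, ?_, hnv⟩
      · have hYv : (Y.erase v).Nonempty := by
          rw [← Finset.card_pos, Finset.card_erase_of_mem hvY]
          omega
        obtain ⟨ℓ, hℓ⟩ := hYv
        obtain ⟨hℓv, hℓY⟩ := Finset.mem_erase.mp hℓ
        refine ⟨ℓ, hℓY, hin ℓ ?_⟩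
        intro hcon
        rcases sum_elim_eq_imp ℓ v hcon with rfl | rfl
        · exact hℓv rfl
        · exact hvbar hℓY
      · have hnsub : ¬ L ⊆ Y := fun hsub => hinsert (Finset.insert_subset hvY hsub)
        obtain ⟨ℓ, hℓL, hℓY⟩ := Finset.not_subset.mp hnsub
        exact ⟨ℓ, hℓY, hin ℓ (by simpa [hL] using hℓL)⟩
    have hScard : seqCount (letterMap f v) = S.card := by
      unfold seqCount
      have h1 : {i | letterMap f v i = none}.ncard
          = (Finset.univ.filter (fun p => letterMap f v p = none)).card := by
        rw [← Set.ncard_coe_finset]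
        congr 1
        ext x
        simp
      rw [h1, card_none_eq_card_nopre _ hg, hS]
      congr 1
      apply Finset.filter_congr
      intro p _
      simp [hasIn, not_exists]
    have h1 : (S \ P).card + P.card = S.card := Finset.card_sdiff_add_card_eq_card hPS
    have h2 : (S \ P).card ≤ U.card := Finset.card_le_card hSdiff
    have hPcard : ({p : Fin n | (∃ ℓ ∈ Y, hasIn f ℓ p) ∧ (∃ ℓ ∉ Y, hasIn f ℓ p) ∧
        ¬ hasIn f v p}).ncard = P.card := Set.ncard_eq_toFinset_card _ _
    have hsum : (∑ a ∈ Finset.univ.erase (Sum.elim id id v),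
        ((extr (letterMap f v) ∩ extr (f a)).ncard : ℤ))
        = ((∑ a ∈ Finset.univ.erase (Sum.elim id id v),
          (extr (letterMap f v) ∩ extr (f a)).ncard : ℕ) : ℤ) := by
      push_cast
      rfl
    rw [hScard, hPcard, hsum]
    have := hUcard
    omega
end
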